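/- arXiv:2502.18053 — 2 statements merged into one kernel-verified Lean document; each statement's English description precedes it below -/
import Mathlib

section
/- Let $k$ be a finite field, $d \geq 1$, and $g_1,\dots,g_d \in X\cdot k[[X]]$ pairwise distinct. Let $I = (X,Y)^d \subset k[[X,Y]]$. Then there exists $n \geq 0$ such that for every $f \in k[[X,Y]]$, if $f(X, g_b(X)) \in X^n k[[X]]$ for all $b = 1,\dots,d$, then $f \in I$. -/
/-!
Induction on `d`. Division by `Y - g_d` gives `f = (Y - g_d) q + f(X, g_d)`, the `i`-th
coefficient of `q` being the `X`-adically convergent series `∑ⱼ a_{i+j+1} g_dʲ`. For `b < d`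
this yields `f(X, g_b) - f(X, g_d) = (g_b - g_d) q(X, g_b)`. Since `k[[X]]` is a domain and
`g_b ≠ g_d`, a high `X`-adic valuation of the left side forces a high valuation of
`q(X, g_b)`, so `q ∈ (X, Y)^(d-1)` by induction, while `f(X, g_d) ∈ X^n k[[X]] ⊆ (X, Y)^d`
once `n ≥ d`.
-/

set_option synthInstance.maxHeartbeats 1000000
set_option maxHeartbeats 1000000

/-- Substitution `F(X, g(X))` for `F ∈ k[[X,Y]] = (k[[X]])[[Y]]` and `g ∈ k[[X]]`
with zero constant term. -/
noncomputable def PSEvalY {k : Type*} [CommRing k] (F : PowerSeries (PowerSeries k))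
    (g : PowerSeries k) : PowerSeries k :=
  PowerSeries.mk fun m => ∑ n ∈ Finset.range (m + 1),
    PowerSeries.coeff (R := k) m (PowerSeries.coeff (R := PowerSeries k) n F * g ^ n)

open PowerSeries Finset

namespace PowerSeries

variable {R : Type*}

theorem X_pow_dvd_iff_le_order [Semiring R] {φ : R⟦X⟧} {n : ℕ} :
    X ^ n ∣ φ ↔ (n : ℕ∞) ≤ φ.order := by
  rw [order_eq_emultiplicity_X]
  exact pow_dvd_iff_le_emultiplicity

theorem X_pow_dvd_of_X_pow_order_add_dvd_mul [Semiring R] [NoZeroDivisors R] {φ ψ : R⟦X⟧}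
    (hφ : φ ≠ 0) {n : ℕ} (h : X ^ (φ.order.toNat + n) ∣ φ * ψ) : X ^ n ∣ ψ := by
  rw [X_pow_dvd_iff_le_order, order_mul, ← coe_toNat_order hφ, Nat.cast_add] at h
  rw [X_pow_dvd_iff_le_order]
  exact (ENat.add_le_add_iff_left (ENat.natCast_ne_top _)).mp h

theorem eq_of_forall_X_pow_dvd_sub [Ring R] {φ ψ : R⟦X⟧}
    (h : ∀ N, X ^ N ∣ φ - ψ) : φ = ψ := by
  rw [← sub_eq_zero]
  ext m
  simpa using X_pow_dvd_iff.mp (h (m + 1)) m (Nat.lt_succ_self m)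

end PowerSeries

section Eval

variable {k : Type*} [CommRing k] {g : k⟦X⟧}

theorem X_pow_dvd_PSEvalY_sub_sum (hg : constantCoeff g = 0) (F : k⟦X⟧⟦X⟧) (N : ℕ) :
    X ^ N ∣ PSEvalY F g - ∑ n ∈ range N, coeff n F * g ^ n := by
  rw [X_pow_dvd_iff]
  intro m hm
  rw [map_sub, PSEvalY, coeff_mk, map_sum, sub_eq_zero]
  refine sum_subset (range_subset_range.mpr hm) fun n hnN hnm => ?_
  have hXg : X ^ n ∣ coeff n F * g ^ n :=
    dvd_mul_of_dvd_right (pow_dvd_pow_of_dvd (X_dvd_iff.mpr hg) n) _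
  exact X_pow_dvd_iff.mp hXg m (by simp only [mem_range] at hnm; omega)

theorem PSEvalY_add (F G : k⟦X⟧⟦X⟧) (g : k⟦X⟧) :
    PSEvalY (F + G) g = PSEvalY F g + PSEvalY G g := by
  ext m
  simp only [PSEvalY, coeff_mk, map_add, add_mul, sum_add_distrib]

theorem PSEvalY_sub (F G : k⟦X⟧⟦X⟧) (g : k⟦X⟧) :
    PSEvalY (F - G) g = PSEvalY F g - PSEvalY G g := by
  ext m
  simp only [PSEvalY, coeff_mk, map_sub, sub_mul, sum_sub_distrib]

theorem PSEvalY_C (a g : k⟦X⟧) : PSEvalY (C a) g = a := by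
  ext m
  rw [PSEvalY, coeff_mk, sum_eq_single 0]
  · simp
  · intro n _ hn
    simp [coeff_C, hn]
  · simp

theorem PSEvalY_C_mul (hg : constantCoeff g = 0) (a : k⟦X⟧) (F : k⟦X⟧⟦X⟧) :
    PSEvalY (C a * F) g = a * PSEvalY F g := by
  refine eq_of_forall_X_pow_dvd_sub fun N => ?_
  have hsum : ∑ n ∈ range N, coeff n (C a * F) * g ^ n =
      a * ∑ n ∈ range N, coeff n F * g ^ n := by
    simp only [coeff_C_mul, mul_sum, mul_assoc]
  have h1 := X_pow_dvd_PSEvalY_sub_sum hg (C a * F) N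
  have h2 := X_pow_dvd_PSEvalY_sub_sum hg F N
  rw [hsum] at h1
  convert dvd_sub h1 (dvd_mul_of_dvd_right h2 a) using 1
  ring

theorem PSEvalY_X_mul (hg : constantCoeff g = 0) (F : k⟦X⟧⟦X⟧) :
    PSEvalY (X * F) g = g * PSEvalY F g := by
  refine eq_of_forall_X_pow_dvd_sub fun N => ?_
  have hsum : ∑ n ∈ range (N + 1), coeff n (X * F) * g ^ n =
      g * ∑ n ∈ range N, coeff n F * g ^ n := by
    simp only [sum_range_succ', coeff_succ_X_mul, coeff_zero_X_mul, zero_mul, add_zero, mul_sum,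
      pow_succ]
    exact sum_congr rfl fun n _ => by ring
  have h1 := X_pow_dvd_PSEvalY_sub_sum hg (X * F) (N + 1)
  have h2 := X_pow_dvd_PSEvalY_sub_sum hg F N
  rw [hsum] at h1
  convert dvd_sub ((pow_dvd_pow X N.le_succ).trans h1) (dvd_mul_of_dvd_right h2 g) using 1
  ring

theorem PSEvalY_eq_constantCoeff_add_mul (hg : constantCoeff g = 0) (F : k⟦X⟧⟦X⟧) :
    PSEvalY F g = constantCoeff F + g * PSEvalY (mk fun p => coeff (p + 1) F) g := by
  conv_lhs => rw [eq_X_mul_shift_add_const F]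
  rw [PSEvalY_add, PSEvalY_X_mul hg, PSEvalY_C, add_comm]

theorem exists_eq_X_sub_C_mul_add_C_PSEvalY (hg : constantCoeff g = 0) (F : k⟦X⟧⟦X⟧) :
    ∃ Q : k⟦X⟧⟦X⟧, F = (X - C g) * Q + C (PSEvalY F g) := by
  set tail : ℕ → k⟦X⟧⟦X⟧ := fun i => mk fun j => coeff (i + j + 1) F
  have hshift : ∀ i, (mk fun j => coeff (j + 1) (tail i)) = tail (i + 1) := by
    intro i
    ext j : 1
    simp only [tail, coeff_mk]
    ring_nf
  have hconst : ∀ i, constantCoeff (tail i) = coeff (i + 1) F := by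
    intro i
    rw [← coeff_zero_eq_constantCoeff_apply]
    simp [tail]
  have htail : ∀ i, PSEvalY (tail i) g = coeff (i + 1) F + g * PSEvalY (tail (i + 1)) g := by
    intro i
    rw [PSEvalY_eq_constantCoeff_add_mul hg, hshift, hconst]
  have hF : PSEvalY F g = constantCoeff F + g * PSEvalY (tail 0) g := by
    rw [PSEvalY_eq_constantCoeff_add_mul hg]
    simp only [tail, zero_add]
  refine ⟨mk fun i => PSEvalY (tail i) g, ?_⟩
  ext (_ | i) : 1
  · simp only [map_add, sub_mul, map_sub, coeff_zero_X_mul, coeff_C_mul, coeff_mk]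
    rw [coeff_zero_C, hF, coeff_zero_eq_constantCoeff_apply]
    ring
  · simp only [map_add, sub_mul, map_sub, coeff_succ_X_mul, coeff_C_mul, coeff_mk, coeff_C,
      Nat.succ_ne_zero, if_false, htail i]
    ring

theorem PSEvalY_X_sub_C_mul_add_C {g' : k⟦X⟧} (hg' : constantCoeff g' = 0) (Q : k⟦X⟧⟦X⟧)
    (a : k⟦X⟧) : PSEvalY ((X - C g) * Q + C a) g' = (g' - g) * PSEvalY Q g' + a := by
  rw [sub_mul, PSEvalY_add, PSEvalY_sub, PSEvalY_X_mul hg', PSEvalY_C_mul hg', PSEvalY_C, sub_mul]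

end Eval

section Ideal

variable {k : Type*} [CommRing k]

theorem C_mem_span_C_X_X {a : k⟦X⟧} (ha : constantCoeff a = 0) :
    C a ∈ Ideal.span {C X, (X : k⟦X⟧⟦X⟧)} := by
  obtain ⟨b, rfl⟩ := X_dvd_iff.mpr ha
  rw [map_mul]
  exact Ideal.mul_mem_right _ _ (Ideal.subset_span (by simp))

theorem X_sub_C_mem_span_C_X_X {a : k⟦X⟧} (ha : constantCoeff a = 0) :
    X - C a ∈ Ideal.span {C X, (X : k⟦X⟧⟦X⟧)} :=
  sub_mem (Ideal.subset_span (by simp)) (C_mem_span_C_X_X ha)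

theorem C_mem_span_C_X_X_pow_of_X_pow_dvd {a : k⟦X⟧} {d n : ℕ} (hdn : d ≤ n)
    (ha : X ^ n ∣ a) :
    C a ∈ Ideal.span {C X, (X : k⟦X⟧⟦X⟧)} ^ d := by
  obtain ⟨b, rfl⟩ := ha
  rw [map_mul, map_pow]
  exact Ideal.mul_mem_right _ _
    (Ideal.pow_le_pow_right hdn (Ideal.pow_mem_pow (Ideal.subset_span (by simp)) n))

theorem exists_forall_X_pow_dvd_PSEvalY_imp_mem_pow [NoZeroDivisors k] (d : ℕ)
    (g : Fin d → k⟦X⟧) (hg0 : ∀ b, constantCoeff (g b) = 0) (hginj : Function.Injective g) :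
    ∃ n, ∀ F : k⟦X⟧⟦X⟧, (∀ b, X ^ n ∣ PSEvalY F (g b)) →
      F ∈ Ideal.span {C X, (X : k⟦X⟧⟦X⟧)} ^ d := by
  induction d with
  | zero => exact ⟨0, fun F _ => by simp⟩
  | succ d ih =>
    set c := g (Fin.last d)
    obtain ⟨n, hn⟩ := ih (fun b => g b.castSucc) (fun b => hg0 _)
      (hginj.comp (Fin.castSucc_injective d))
    set E := ∑ b : Fin d, (g b.castSucc - c).order.toNat
    refine ⟨E + n + (d + 1), fun F hF => ?_⟩
    obtain ⟨Q, hQ⟩ := exists_eq_X_sub_C_mul_add_C_PSEvalY (hg0 (Fin.last d)) F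
    have hQmem : Q ∈ Ideal.span {C X, (X : k⟦X⟧⟦X⟧)} ^ d := by
      refine hn Q fun b => ?_
      have hne : g b.castSucc - c ≠ 0 :=
        sub_ne_zero.mpr (hginj.ne (Fin.castSucc_lt_last b).ne)
      have heval : (g b.castSucc - c) * PSEvalY Q (g b.castSucc) =
          PSEvalY F (g b.castSucc) - PSEvalY F c := by
        have := congrArg (PSEvalY · (g b.castSucc)) hQ
        rw [PSEvalY_X_sub_C_mul_add_C (hg0 _)] at this
        linear_combination -this
      have hle : (g b.castSucc - c).order.toNat ≤ E :=
        single_le_sum (f := fun b => (g b.castSucc - c).order.toNat) (fun _ _ => Nat.zero_le _)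
          (mem_univ b)
      refine X_pow_dvd_of_X_pow_order_add_dvd_mul hne ?_
      rw [heval]
      exact (pow_dvd_pow X (by omega)).trans (dvd_sub (hF _) (hF _))
    rw [hQ]
    refine add_mem ?_ (C_mem_span_C_X_X_pow_of_X_pow_dvd (by omega) (hF (Fin.last d)))
    rw [pow_succ']
    exact Ideal.mul_mem_mul (X_sub_C_mem_span_C_X_X (hg0 _)) hQmem

end Ideal

theorem stmt2_general {k : Type*} [Field k] (d : ℕ)
    (g : Fin d → PowerSeries k)
    (hg0 : ∀ b, PowerSeries.constantCoeff (R := k) (g b) = 0)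
    (hginj : Function.Injective g) :
    ∃ n : ℕ, ∀ f : PowerSeries (PowerSeries k),
      (∀ b : Fin d, ∃ h : PowerSeries k, PSEvalY f (g b) = PowerSeries.X ^ n * h) →
      f ∈ (Ideal.span {PowerSeries.C (R := PowerSeries k) PowerSeries.X,
        (PowerSeries.X : PowerSeries (PowerSeries k))}) ^ d :=
  exists_forall_X_pow_dvd_PSEvalY_imp_mem_pow d g hg0 hginj

/-- For a finite field `k`, `d ≥ 1` and pairwise distinct `g_1, …, g_d ∈ X·k[[X]]`,
with `I = (X,Y)^d ⊆ k[[X,Y]]`, there is an `n` such that any `f ∈ k[[X,Y]]` with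
`f(X, g_b(X)) ∈ X^n k[[X]]` for all `b` lies in `I`. -/
theorem stmt2 {k : Type*} [Field k] [Fintype k] (d : ℕ) (hd : 1 ≤ d)
    (g : Fin d → PowerSeries k)
    (hg0 : ∀ b, PowerSeries.constantCoeff (R := k) (g b) = 0)
    (hginj : Function.Injective g) :
    ∃ n : ℕ, ∀ f : PowerSeries (PowerSeries k),
      (∀ b : Fin d, ∃ h : PowerSeries k, PSEvalY f (g b) = PowerSeries.X ^ n * h) →
      f ∈ (Ideal.span {PowerSeries.C (R := PowerSeries k) PowerSeries.X,
        (PowerSeries.X : PowerSeries (PowerSeries k))}) ^ d :=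
  stmt2_general d g hg0 hginj
end

section
/- Let $F$ be a finite extension of $\mathbf{Q}_p$ with residue field $k$ and Lubin--Tate group $\operatorname{LT}$. If $f, g \in o_F[[X]]^{\psi=0}$ and $m, \ell \geq 0$, then the product $c_{f,m}(T)\cdot c_{g,\ell}(T)$ of the associated integer-valued coefficient polynomials lies in $\operatorname{Pol}(o_F[[X]]^{\psi=0}) + \pi\cdot\operatorname{Int}$; i.e., the image of $\operatorname{Pol}(o_F[[X]]^{\psi=0})$ in $\operatorname{Int}/\pi\operatorname{Int}$ is a subring. -/
open PowerSeries

/-- Composition `f(g(X))` of formal power series (valid when `g` has zero constant term):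
the coefficient of `X^m` in `∑ n, f_n g(X)^n` only involves `n ≤ m`. -/
noncomputable def PSComp {R : Type*} [CommRing R] (f g : PowerSeries R) : PowerSeries R :=
  PowerSeries.mk fun m => ∑ n ∈ Finset.range (m + 1),
    PowerSeries.coeff m (PowerSeries.C (PowerSeries.coeff n f) * g ^ n)

/-- Evaluation `A(u,v)` of a two-variable power series `A ∈ R[[X,Y]] = (R[[X]])[[Y]]`
at `u, v` with zero constant term. -/
noncomputable def PSEval2 {R : Type*} [CommRing R] (A : PowerSeries (PowerSeries R))
    (u v : PowerSeries R) : PowerSeries R :=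
  PowerSeries.mk fun m => ∑ j ∈ Finset.range (m + 1),
    PowerSeries.coeff m (PSComp (PowerSeries.coeff j A) u * v ^ j)

/-- A Lubin--Tate formal group over `O` attached to the uniformizer `π`, with residue
cardinality `q`: the addition law `add ∈ O[[X,Y]]`, the endomorphisms `[a](X)` for
`a ∈ O`, normalized so that `[a](X) = aX + O(X^2)`, compatible with the ring structure
of `O`, and such that `[π](X) ≡ X^q mod π`. -/
structure LubinTate (O : Type*) [CommRing O] (π : O) (q : ℕ) where
  add : PowerSeries (PowerSeries O)
  endo : O → PowerSeries O
  endo_const : ∀ a, PowerSeries.constantCoeff (endo a) = 0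
  endo_lin : ∀ a, PowerSeries.coeff 1 (endo a) = a
  endo_one : endo 1 = PowerSeries.X
  endo_mul : ∀ a b, endo (a * b) = PSComp (endo a) (endo b)
  endo_add : ∀ a b, endo (a + b) = PSEval2 add (endo a) (endo b)
  add_X_zero : PSEval2 add PowerSeries.X 0 = PowerSeries.X
  add_zero_X : PSEval2 add 0 PowerSeries.X = PowerSeries.X
  endo_pi_frob : ∀ n : ℕ,
    PowerSeries.coeff n (endo π) - (if n = q then 1 else 0) ∈ Ideal.span {π}

/-!
Write `[a]` for `LT.endo a`, and take `r = m + 1`, so that `s = q ^ r > m`. Since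
`[π^r](X) ≡ X^s mod π` and `[a] ∘ [π^r] = [π^r] ∘ [a]`, the coefficient of `X^(m + sℓ)` in
`(f · g([π^r]))([a](X)) = f([a](X)) · g([a](X))([π^r](X))` is congruent mod `π` to
`∑_{k ≤ ℓ} c_{f, m + s(ℓ-k)}(a) c_{g,k}(a)`. The series `f · g([π^r])` lies in `ker ψ`, because
`ψ(h · u([π])) = ψ(h) · u`; this rests on the uniqueness of the decomposition
`h = ∑ X^i (D h i)([π])`, which holds mod `π` since `[π] ≡ X^q`, and then over `o_F` by Krull's
intersection theorem. Hence `c_{f,m} c_{g,ℓ}` is, modulo `π·Int`, an element of `Pol(ker ψ)`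
minus products `c_{f,n} c_{g,k}` with `k < ℓ`, and strong induction on `ℓ` concludes.
-/

open Finset

theorem PSComp_eq_subst {R : Type*} [CommRing R] {g : R⟦X⟧} (hg : constantCoeff g = 0)
    (f : R⟦X⟧) : PSComp f g = f.subst g := by
  ext m
  rw [PSComp, coeff_mk, coeff_subst' (.of_constantCoeff_zero' hg),
    finsum_eq_sum_of_support_subset (s := range (m + 1))]
  · simp only [coeff_C_mul, smul_eq_mul]
  · refine Function.support_subset_iff'.mpr fun n hn => ?_
    show coeff n f • coeff m (g ^ n) = 0
    rw [coeff_of_lt_order (φ := g ^ n) m, smul_zero]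
    exact (Nat.cast_lt.mpr (by simpa using hn)).trans_le
      (le_order_pow_of_constantCoeff_eq_zero n hg)

-- `map_subst` is stated with `MvPowerSeries.map`, so it does not rewrite `PowerSeries.map`.
theorem PowerSeries.map_subst_of_powerSeries {R S : Type*} [CommRing R] [CommRing S]
    {a : R⟦X⟧} (ha : HasSubst a) (h : R →+* S) (f : R⟦X⟧) :
    map h (f.subst a) = (map h f).subst (map h a) :=
  map_subst ha f

theorem coeff_mul_subst_X_pow {R : Type*} [CommRing R] (A B : R⟦X⟧) {s : ℕ} (hs : 0 < s)
    (N : ℕ) : coeff N (A * B.subst (X ^ s : R⟦X⟧)) =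
      ∑ k ∈ range (N / s + 1), coeff (N - s * k) A * coeff k B := by
  have hdvd : (range (N + 1)).filter (s ∣ ·) = (range (N / s + 1)).image (s * ·) := by
    ext i
    simp only [mem_filter, mem_range, mem_image]
    constructor
    · rintro ⟨hi, k, rfl⟩
      exact ⟨k, Nat.lt_succ_of_le ((Nat.le_div_iff_mul_le hs).mpr (by linarith)), rfl⟩
    · rintro ⟨k, hk, rfl⟩
      have hks : k * s ≤ N := (Nat.le_div_iff_mul_le hs).mp (Nat.le_of_lt_succ hk)
      exact ⟨by rw [mul_comm]; omega, dvd_mul_right s k⟩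
  rw [mul_comm, coeff_mul, Nat.sum_antidiagonal_eq_sum_range_succ_mk]
  simp only [coeff_subst_X_pow hs.ne', Algebra.algebraMap_self, RingHom.id_apply, ite_mul,
    zero_mul]
  rw [← sum_filter, hdvd, sum_image (fun _ _ _ _ h => Nat.eq_of_mul_eq_mul_left hs h)]
  refine sum_congr rfl fun k _ => ?_
  rw [Nat.mul_div_cancel_left k hs, mul_comm]

theorem coeff_X_pow_mul_subst_X_pow {R : Type*} [CommRing R] (B : R⟦X⟧) {q i j : ℕ}
    (hi : i < q) (hj : j < q) (N : ℕ) :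
    coeff (q * N + i) (X ^ j * B.subst (X ^ q : R⟦X⟧)) = if j = i then coeff N B else 0 := by
  have hq : q ≠ 0 := by omega
  rw [coeff_X_pow_mul', coeff_subst_X_pow hq]
  by_cases hji : j = i
  · subst hji
    simp [Nat.mul_div_cancel_left N (Nat.pos_of_ne_zero hq)]
  rw [if_neg hji]
  split_ifs with hle hdvd
  · obtain ⟨c, hc⟩ := hdvd
    have hmod := congrArg (· % q) (show i + q * N = j + q * c by omega)
    simp only [Nat.add_mul_mod_self_left, Nat.mod_eq_of_lt hi, Nat.mod_eq_of_lt hj] at hmod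
    exact absurd hmod.symm hji
  all_goals rfl

theorem eq_zero_of_sum_X_pow_mul_subst_X_pow_eq_zero {R : Type*} [CommRing R] {q : ℕ}
    {e : Fin q → R⟦X⟧} (h : ∑ j : Fin q, X ^ (j : ℕ) * (e j).subst (X ^ q : R⟦X⟧) = 0)
    (i : Fin q) : e i = 0 := by
  ext N
  have := congrArg (coeff (q * N + i)) h
  simpa [map_sum, coeff_X_pow_mul_subst_X_pow _ i.isLt (Fin.isLt _), Fin.val_inj] using this

theorem PowerSeries.C_dvd_of_forall_dvd_coeff {R : Type*} [CommRing R] {a : R} {f : R⟦X⟧}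
    (h : ∀ n, a ∣ coeff n f) : C a ∣ f :=
  ⟨mk fun n => (h n).choose, by ext n; rw [coeff_C_mul, coeff_mk]; exact (h n).choose_spec⟩

section Decomposition

variable {O : Type*} [CommRing O] {π : O} {q : ℕ} {φ : O⟦X⟧}

theorem dvd_coeff_of_sum_X_pow_mul_subst_eq_zero (hφ0 : constantCoeff φ = 0)
    (hφ : map (Ideal.Quotient.mk (Ideal.span {π})) φ = X ^ q) {e : Fin q → O⟦X⟧}
    (h : ∑ j : Fin q, X ^ (j : ℕ) * (e j).subst φ = 0) (i : Fin q) (N : ℕ) :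
    π ∣ coeff N (e i) := by
  have hmod := congrArg (map (Ideal.Quotient.mk (Ideal.span {π}))) h
  simp only [map_sum, map_mul, map_pow, map_X,
    map_subst_of_powerSeries (.of_constantCoeff_zero' hφ0), hφ, map_zero] at hmod
  have hi := congrArg (coeff N) (eq_zero_of_sum_X_pow_mul_subst_X_pow_eq_zero hmod i)
  rwa [coeff_map, map_zero, Ideal.Quotient.eq_zero_iff_mem, Ideal.mem_span_singleton] at hi

variable [IsDomain O] [IsNoetherianRing O]

theorem eq_zero_of_sum_X_pow_mul_subst_eq_zero (hπ : ¬IsUnit π) (hπ0 : π ≠ 0)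
    (hφ0 : constantCoeff φ = 0) (hφ : map (Ideal.Quotient.mk (Ideal.span {π})) φ = X ^ q)
    {e : Fin q → O⟦X⟧} (h : ∑ j : Fin q, X ^ (j : ℕ) * (e j).subst φ = 0) (i : Fin q) :
    e i = 0 := by
  have hpow : ∀ n (e : Fin q → O⟦X⟧), ∑ j : Fin q, X ^ (j : ℕ) * (e j).subst φ = 0 →
      ∀ i N, π ^ n ∣ coeff N (e i) := by
    intro n
    induction n with
    | zero => simp
    | succ n ih =>
      intro e he i N
      choose e' he' using fun j =>
        C_dvd_of_forall_dvd_coeff (dvd_coeff_of_sum_X_pow_mul_subst_eq_zero hφ0 hφ he j)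
      have he'0 : ∑ j : Fin q, X ^ (j : ℕ) * (e' j).subst φ = 0 := by
        refine (mul_eq_zero.mp ?_).resolve_left (C_injective.ne hπ0 |>.trans_eq (map_zero C))
        simp only [he', ← smul_eq_C_mul, subst_smul (.of_constantCoeff_zero' hφ0), mul_smul_comm,
          ← smul_sum] at he
        rwa [smul_eq_C_mul] at he
      rw [he' i, coeff_C_mul, pow_succ']
      exact mul_dvd_mul_left π (ih e' he'0 i N)
  have hbot := Ideal.iInf_pow_eq_bot_of_isDomain (I := Ideal.span {π})
    (by rwa [Ne, Ideal.span_singleton_eq_top])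
  ext N
  rw [map_zero, ← Ideal.mem_bot, ← hbot, Submodule.mem_iInf]
  intro n
  rw [Ideal.span_singleton_pow, Ideal.mem_span_singleton]
  exact hpow n e h i N

theorem psi_mul_subst (hπ : ¬IsUnit π) (hπ0 : π ≠ 0) (hφ0 : constantCoeff φ = 0)
    (hφ : map (Ideal.Quotient.mk (Ideal.span {π})) φ = X ^ q) {D : O⟦X⟧ → Fin q → O⟦X⟧}
    (hD : ∀ f, f = ∑ i : Fin q, X ^ (i : ℕ) * (D f i).subst φ) {ψ : O⟦X⟧ → O⟦X⟧}
    (hψ : ∀ f, C π * ψ f = ∑ i : Fin q, D (X ^ (i : ℕ) * f) i) (f u : O⟦X⟧) :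
    ψ (f * u.subst φ) = ψ f * u := by
  have hφ' : HasSubst φ := .of_constantCoeff_zero' hφ0
  have hDmul : ∀ h i, D (h * u.subst φ) i = D h i * u := by
    intro h i
    refine sub_eq_zero.mp (eq_zero_of_sum_X_pow_mul_subst_eq_zero hπ hπ0 hφ0 hφ
      (e := fun i => D (h * u.subst φ) i - D h i * u) ?_ i)
    simp only [subst_sub hφ', subst_mul hφ', mul_sub, sum_sub_distrib, ← mul_assoc, ← sum_mul,
      ← hD, sub_self]
  refine mul_left_cancel₀ (C_injective.ne hπ0 |>.trans_eq (map_zero C)) ?_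
  calc C π * ψ (f * u.subst φ) = ∑ i : Fin q, D (X ^ (i : ℕ) * f) i * u := by
        simp only [hψ, ← mul_assoc, hDmul]
    _ = C π * (ψ f * u) := by rw [← sum_mul, ← hψ, mul_assoc]

end Decomposition

namespace LubinTate

variable {O : Type*} [CommRing O] {π : O} {q : ℕ}

theorem two_le (LT : LubinTate O π q) (hπ : ¬IsUnit π) : 2 ≤ q := by
  by_contra! hq
  have hcoeff : coeff q (LT.endo π) ∈ Ideal.span {π} := by
    rcases (by omega : q = 0 ∨ q = 1) with rfl | rfl
    · simp [LT.endo_const]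
    · rw [LT.endo_lin]
      exact Ideal.mem_span_singleton_self π
  have h1 : (1 : O) ∈ Ideal.span {π} := by
    simpa using Ideal.sub_mem _ hcoeff (LT.endo_pi_frob q)
  exact hπ (Ideal.span_singleton_eq_top.mp ((Ideal.eq_top_iff_one _).mpr h1))

variable (LT : LubinTate O π q)

theorem hasSubst_endo (a : O) : HasSubst (LT.endo a) :=
  .of_constantCoeff_zero' (LT.endo_const a)

theorem endo_mul_eq_subst (a b : O) : LT.endo (a * b) = (LT.endo a).subst (LT.endo b) := by
  rw [LT.endo_mul, PSComp_eq_subst (LT.endo_const b)]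

theorem subst_endo_comm (a b : O) :
    (LT.endo a).subst (LT.endo b) = (LT.endo b).subst (LT.endo a) := by
  rw [← endo_mul_eq_subst, ← endo_mul_eq_subst, mul_comm]

theorem map_endo_pi : map (Ideal.Quotient.mk (Ideal.span {π})) (LT.endo π) = X ^ q := by
  ext n
  rw [coeff_map, coeff_X_pow, Ideal.Quotient.eq.mpr (LT.endo_pi_frob n)]
  split_ifs <;> simp

theorem map_endo_pi_pow (r : ℕ) :
    map (Ideal.Quotient.mk (Ideal.span {π})) (LT.endo (π ^ r)) = X ^ q ^ r := by
  induction r with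
  | zero => simp [LT.endo_one]
  | succ r ih =>
    have hsubst : HasSubst (map (Ideal.Quotient.mk (Ideal.span {π})) (LT.endo π)) :=
      .of_constantCoeff_zero' (by
        rw [← coeff_zero_eq_constantCoeff_apply, coeff_map, coeff_zero_eq_constantCoeff_apply,
          LT.endo_const, map_zero])
    rw [pow_succ, endo_mul_eq_subst, map_subst_of_powerSeries (LT.hasSubst_endo π), ih,
      subst_pow hsubst, subst_X hsubst, LT.map_endo_pi, ← pow_mul, pow_succ, mul_comm]

theorem coeff_subst_endo_mul_subst_endo_pi_pow_sub_mem (hq : 0 < q) (f g : O⟦X⟧) (a : O)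
    (r N : ℕ) :
    coeff N ((f * g.subst (LT.endo (π ^ r))).subst (LT.endo a)) -
      ∑ k ∈ range (N / q ^ r + 1),
        coeff (N - q ^ r * k) (f.subst (LT.endo a)) * coeff k (g.subst (LT.endo a)) ∈
      Ideal.span {π} := by
  rw [subst_mul (LT.hasSubst_endo a), subst_comp_subst_apply (LT.hasSubst_endo _)
    (LT.hasSubst_endo a), ← subst_endo_comm, ← subst_comp_subst_apply (LT.hasSubst_endo a)
    (LT.hasSubst_endo _), ← Ideal.Quotient.eq_zero_iff_mem, map_sub, sub_eq_zero, ← coeff_map,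
    map_mul, map_subst_of_powerSeries (LT.hasSubst_endo (π ^ r)), LT.map_endo_pi_pow,
    coeff_mul_subst_X_pow _ _ (pow_pos hq r), map_sum]
  simp only [coeff_map, map_mul]

end LubinTate

-- `intValuedIn K (Ideal.span {π})` is the paper's `π·Int`.
def intValuedIn {O : Type*} (K : Type*) [CommRing O] [CommRing K] [Algebra O K] (I : Ideal O) :
    Submodule O (Polynomial K) where
  carrier := {P | ∀ a : O, ∃ z ∈ I, P.eval (algebraMap O K a) = algebraMap O K z}
  add_mem' {P Q} hP hQ a := by
    obtain ⟨y, hy, hPy⟩ := hP a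
    obtain ⟨z, hz, hQz⟩ := hQ a
    exact ⟨y + z, I.add_mem hy hz, by rw [Polynomial.eval_add, hPy, hQz, map_add]⟩
  zero_mem' _ := ⟨0, I.zero_mem, by rw [Polynomial.eval_zero, map_zero]⟩
  smul_mem' c P hP a := by
    obtain ⟨z, hz, hPz⟩ := hP a
    exact ⟨c * z, I.mul_mem_left c hz, by
      rw [Polynomial.eval_smul, hPz, Algebra.smul_def, map_mul]⟩

theorem exists_eq_smul_of_mem_intValuedIn_span_singleton {O K : Type*} [CommRing O] [Field K]
    [Algebra O K] {π : O} (hπ : algebraMap O K π ≠ 0) {P : Polynomial K}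
    (hP : P ∈ intValuedIn K (Ideal.span {π})) :
    ∃ Q : Polynomial K, (∀ a : O, ∃ b, Q.eval (algebraMap O K a) = algebraMap O K b) ∧
      P = algebraMap O K π • Q := by
  refine ⟨(algebraMap O K π)⁻¹ • P, fun a => ?_, by rw [smul_smul, mul_inv_cancel₀ hπ, one_smul]⟩
  obtain ⟨z, hz, hPz⟩ := hP a
  obtain ⟨b, rfl⟩ := Ideal.mem_span_singleton.mp hz
  exact ⟨b, by rw [Polynomial.eval_smul, hPz, smul_eq_mul, map_mul, inv_mul_cancel_left₀ hπ]⟩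

theorem LubinTate.cpoly_mul_mem_span_sup_intValuedIn {O K : Type*} [CommRing O] [CommRing K]
    [Algebra O K] {π : O} {q : ℕ} (LT : LubinTate O π q) (hπ : ¬IsUnit π)
    {ψ : O⟦X⟧ → O⟦X⟧} (hψ : ∀ f u, ψ (f * u.subst (LT.endo π)) = ψ f * u)
    {cpoly : O⟦X⟧ → ℕ → Polynomial K}
    (hcpoly : ∀ f n a, (cpoly f n).eval (algebraMap O K a) =
      algebraMap O K (coeff n (f.subst (LT.endo a))))
    {f : O⟦X⟧} (hf : ψ f = 0) (g : O⟦X⟧) (ℓ m : ℕ) :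
    cpoly f m * cpoly g ℓ ∈ Submodule.span O {c | ∃ h, ψ h = 0 ∧ ∃ n, c = cpoly h n} ⊔
      intValuedIn K (Ideal.span {π}) := by
  induction ℓ using Nat.strong_induction_on generalizing m with
  | _ ℓ ih =>
  have hq := LT.two_le hπ
  have hms : m < q ^ (m + 1) := (Nat.lt_succ_self m).trans (Nat.lt_pow_self (by omega))
  have hh : ψ (f * g.subst (LT.endo (π ^ (m + 1)))) = 0 := by
    rw [pow_succ, LT.endo_mul_eq_subst, ← subst_comp_subst_apply (LT.hasSubst_endo _)
      (LT.hasSubst_endo π), hψ, hf, zero_mul]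
  have hcongr := fun a => LT.coeff_subst_endo_mul_subst_endo_pi_pow_sub_mem (by omega) f g a
    (m + 1) (m + q ^ (m + 1) * ℓ)
  generalize f * g.subst (LT.endo (π ^ (m + 1))) = h at hh hcongr
  generalize q ^ (m + 1) = s at hms hcongr
  rw [Nat.add_mul_div_left _ _ (by omega), Nat.div_eq_of_lt hms, zero_add] at hcongr
  have hdiff : cpoly h (m + s * ℓ) -
      ∑ k ∈ range (ℓ + 1), cpoly f (m + s * ℓ - s * k) * cpoly g k ∈
      intValuedIn K (Ideal.span {π}) := fun a =>
    ⟨_, hcongr a, by simp only [Polynomial.eval_sub, Polynomial.eval_finsetSum,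
      Polynomial.eval_mul, hcpoly, map_sub, map_sum, map_mul]⟩
  have hsplit : cpoly f m * cpoly g ℓ = cpoly h (m + s * ℓ) -
      (cpoly h (m + s * ℓ) - ∑ k ∈ range (ℓ + 1), cpoly f (m + s * ℓ - s * k) * cpoly g k) -
      ∑ k ∈ range ℓ, cpoly f (m + s * ℓ - s * k) * cpoly g k := by
    rw [sum_range_succ, Nat.add_sub_cancel]
    ring
  rw [hsplit]
  exact sub_mem (sub_mem (Submodule.mem_sup_left (Submodule.subset_span ⟨h, hh, _, rfl⟩))
    (Submodule.mem_sup_right hdiff)) (sum_mem fun k hk => ih k (mem_range.mp hk) _)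

theorem stmt18_general (p : ℕ) [Fact p.Prime] (F : Type*) [Field F] [Algebra ℚ_[p] F]
    [FiniteDimensional ℚ_[p] F] [Algebra ℤ_[p] F] [IsScalarTower ℤ_[p] ℚ_[p] F]
    (O : Subalgebra ℤ_[p] F) (hO : O = integralClosure ℤ_[p] F)
    (π : ↥O) (hπ : Irreducible π) (q : ℕ)
    (LT : LubinTate ↥O π q)
    -- `D f` is the (unique) decomposition of `f` in the basis `1, X, ..., X^(q-1)` of
    -- `↥O⟦X⟧` over `φ(↥O⟦X⟧)`, where `φ(h) = h(LT.endo π)`: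
    (D : PowerSeries ↥O → Fin q → PowerSeries ↥O)
    (hD : ∀ f : PowerSeries ↥O,
      f = ∑ i : Fin q, PowerSeries.X ^ (i : ℕ) * PSComp (D f i) (LT.endo π))
    -- `ψ` is characterized by `φ(ψ(f)) = (1/π)·Tr(f)`, i.e. `π·ψ(f)` is the sum of the
    -- diagonal entries of the matrix of multiplication by `f` in the above basis:
    (ψ : PowerSeries ↥O → PowerSeries ↥O)
    (hψ : ∀ f : PowerSeries ↥O,
      PowerSeries.C (π) * ψ f = ∑ i : Fin q, D (PowerSeries.X ^ (i : ℕ) * f) i)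
    -- `cpoly f n` is the integer-valued polynomial `c_{f,n} ∈ F[T]` with
    -- `f([a](X)) = ∑ n, c_{f,n}(a) X^n`:
    (cpoly : PowerSeries ↥O → ℕ → Polynomial F)
    (hcpoly : ∀ (f : PowerSeries ↥O) (n : ℕ) (a : ↥O),
      Polynomial.eval (algebraMap ↥O F a) (cpoly f n) =
        algebraMap ↥O F (PowerSeries.coeff n (PSComp f (LT.endo a))))
    (f g : PowerSeries ↥O) (hf : ψ f = 0) (m ℓ : ℕ) :
    ∃ P ∈ Submodule.span ↥O {c : Polynomial F |
        ∃ h : PowerSeries ↥O, ψ h = 0 ∧ ∃ n : ℕ, c = cpoly h n},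
      ∃ Q : Polynomial F, (∀ a : ↥O, Q.eval (algebraMap ↥O F a) ∈ O) ∧
        cpoly f m * cpoly g ℓ = P + algebraMap ↥O F π • Q := by
  have : IsNoetherianRing O := hO ▸ IsIntegralClosure.isNoetherianRing ℤ_[p] ℚ_[p] F _
  simp only [PSComp_eq_subst (LT.endo_const _)] at hD hcpoly
  have hψ' := psi_mul_subst hπ.not_isUnit hπ.ne_zero (LT.endo_const π) LT.map_endo_pi hD hψ
  obtain ⟨P, hP, R, hR, hPR⟩ := Submodule.mem_sup.mp
    (LT.cpoly_mul_mem_span_sup_intValuedIn hπ.not_isUnit hψ' hcpoly hf g ℓ m)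
  obtain ⟨Q, hQ, rfl⟩ := exists_eq_smul_of_mem_intValuedIn_span_singleton
    (by simpa using hπ.ne_zero) hR
  refine ⟨P, hP, Q, fun a => ?_, hPR.symm⟩
  obtain ⟨b, hb⟩ := hQ a
  exact hb ▸ b.2

/-- If `ψ(f) = ψ(g) = 0`, then `c_(f,m)·c_(g,ℓ) ∈ Pol(o_F[[X]]^(ψ=0)) + π·Int`:
the image of `Pol(o_F[[X]]^(ψ=0))` in `Int/π·Int` is a subring. -/
theorem stmt18 (p : ℕ) [Fact p.Prime] (F : Type*) [Field F] [Algebra ℚ_[p] F]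
    [FiniteDimensional ℚ_[p] F] [Algebra ℤ_[p] F] [IsScalarTower ℤ_[p] ℚ_[p] F]
    (O : Subalgebra ℤ_[p] F) (hO : O = integralClosure ℤ_[p] F)
    (π : ↥O) (hπ : Irreducible π) (q : ℕ)
    (hq : Nat.card (↥O ⧸ Ideal.span {π}) = q)
    (LT : LubinTate ↥O π q)
    -- `D f` is the (unique) decomposition of `f` in the basis `1, X, ..., X^(q-1)` of
    -- `↥O⟦X⟧` over `φ(↥O⟦X⟧)`, where `φ(h) = h(LT.endo π)`:
    (D : PowerSeries ↥O → Fin q → PowerSeries ↥O)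
    (hD : ∀ f : PowerSeries ↥O,
      f = ∑ i : Fin q, PowerSeries.X ^ (i : ℕ) * PSComp (D f i) (LT.endo π))
    -- `ψ` is characterized by `φ(ψ(f)) = (1/π)·Tr(f)`, i.e. `π·ψ(f)` is the sum of the
    -- diagonal entries of the matrix of multiplication by `f` in the above basis:
    (ψ : PowerSeries ↥O → PowerSeries ↥O)
    (hψ : ∀ f : PowerSeries ↥O,
      PowerSeries.C (π) * ψ f = ∑ i : Fin q, D (PowerSeries.X ^ (i : ℕ) * f) i)
    -- `cpoly f n` is the integer-valued polynomial `c_{f,n} ∈ F[T]` with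
    -- `f([a](X)) = ∑ n, c_{f,n}(a) X^n`:
    (cpoly : PowerSeries ↥O → ℕ → Polynomial F)
    (hcpoly : ∀ (f : PowerSeries ↥O) (n : ℕ) (a : ↥O),
      Polynomial.eval (algebraMap ↥O F a) (cpoly f n) =
        algebraMap ↥O F (PowerSeries.coeff n (PSComp f (LT.endo a))))
    (f g : PowerSeries ↥O) (hf : ψ f = 0) (hg : ψ g = 0) (m ℓ : ℕ) :
    ∃ P ∈ Submodule.span ↥O {c : Polynomial F |
        ∃ h : PowerSeries ↥O, ψ h = 0 ∧ ∃ n : ℕ, c = cpoly h n},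
      ∃ Q : Polynomial F, (∀ a : ↥O, Q.eval (algebraMap ↥O F a) ∈ O) ∧
        cpoly f m * cpoly g ℓ = P + algebraMap ↥O F π • Q :=
  stmt18_general p F O hO π hπ q LT D hD ψ hψ cpoly hcpoly f g hf m ℓ
end
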